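/- arXiv:1807.07503 — 2 statements merged into one kernel-verified Lean document; each statement's English description precedes it below -/
import Mathlib

section
/- Let f be a Markov interval map and x ∈ E_f. Then Σ_{i=1}^n T_i T_i* = 1 − P_{e(x)}; that is, the ranges of T_1,…,T_n together with the line ℂ δ_{e(x)} form an orthogonal decomposition of H_x. -/
open scoped Classical ENNReal

noncomputable section

/-- Partition and branch data for a Markov interval map with `n` Markov
subintervals.  `cm j` is the point `c_j⁻` and `cp j` is `c_j⁺` (with
`cm 0 = cp 0 = c₀` and `cm n = cp n = c_n`).  `f` is the globally defined map,
`F j` is the branch of `f` on the `j`-th Markov interval (indexed by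
`j = 0, …, n-1`, corresponding to the interval `I_{j+1}` of the paper) and
`F' j` is the derivative of that branch. -/
structure MarkovSystem (n : ℕ) where
  cm : ℕ → ℝ
  cp : ℕ → ℝ
  f : ℝ → ℝ
  F : ℕ → ℝ → ℝ
  F' : ℕ → ℝ → ℝ
  two_le : 2 ≤ n
  cm_zero : cm 0 = cp 0
  cm_n : cm n = cp n
  cm_le_cp : ∀ j ≤ n, cm j ≤ cp j
  cp_lt_cm : ∀ j < n, cp j < cm (j + 1)

namespace MarkovSystem

variable {n : ℕ} (M : MarkovSystem n)

/-- The Markov interval `I_{j+1} = [c_j⁺, c_{j+1}⁻]` (for `j < n`). -/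
def Ipart (j : ℕ) : Set ℝ := Set.Icc (M.cp j) (M.cm (j + 1))

/-- The escape interval `E_j = (c_j⁻, c_j⁺)` (for `1 ≤ j ≤ n-1`). -/
def Epart (j : ℕ) : Set ℝ := Set.Ioo (M.cm j) (M.cp j)

/-- The ambient interval `I = [c₀, c_n]`. -/
def itv : Set ℝ := Set.Icc (M.cm 0) (M.cm n)

/-- The domain of `f`, namely `⋃_{j=1}^n I_j`. -/
def dom : Set ℝ := ⋃ j ∈ Finset.range n, M.Ipart j

/-- The set `Γ` of partition boundary points. -/
def Gamma : Set ℝ := {y | ∃ j ≤ n, y = M.cm j ∨ y = M.cp j}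

/-- `q`-fold image of a set under `f`, applying `f` only where it is defined. -/
def iterImage : ℕ → Set ℝ → Set ℝ
  | 0, S => S
  | q + 1, S => M.f '' (iterImage q S ∩ M.dom)

/-- `f^k(x)` is defined, i.e. all earlier iterates lie in the domain. -/
def definedUpTo (k : ℕ) (x : ℝ) : Prop := ∀ l < k, M.f^[l] x ∈ M.dom

/-- The orbit equivalence relation `R_f`. -/
def Rrel (x y : ℝ) : Prop :=
  ∃ p q : ℕ, M.definedUpTo p x ∧ M.definedUpTo q y ∧ M.f^[p] x = M.f^[q] y

/-- The generalized orbit `R_f(x)` of a point `x ∈ I`. -/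
def Rclass (x : ℝ) : Set ℝ := {y | y ∈ M.itv ∧ M.Rrel x y}

/-- The maximal invariant set `Ω_f`. -/
def Omega : Set ℝ := {x | x ∈ M.itv ∧ ∀ k, M.f^[k] x ∈ M.dom}

/-- The escape set `E_f = I \ Ω_f`. -/
def Esc : Set ℝ := M.itv \ M.Omega

/-- The regular set `Λ_f = Ω_f \ R_f(Γ)`. -/
def Lambda : Set ℝ := {x | x ∈ M.Omega ∧ ∀ γ ∈ M.Gamma, ¬ M.Rrel x γ}

/-- The escape time of a point of the escape set. -/
def tau (x : ℝ) : ℕ := sInf {k | M.f^[k] x ∉ M.dom}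

/-- The final escape point `e(x) = f^{τ(x)}(x)`. -/
def e (x : ℝ) : ℝ := M.f^[M.tau x] x

/-- The transition-matrix condition `a_{ij} = 1`, i.e. `f(int I_i) ⊇ int I_j`. -/
def trans (i j : ℕ) : Prop := interior (M.Ipart j) ⊆ M.F i '' interior (M.Ipart i)

/-- The escape-transition condition `â_{ik} = 1`, i.e. `int I_i ∩ f⁻¹(E_k) ≠ ∅`. -/
def ahat (i k : ℕ) : Prop := (interior (M.Ipart i) ∩ M.F i ⁻¹' M.Epart k).Nonempty

end MarkovSystem

/-- The defining properties (P1)-(P4) of a Markov interval map, together with the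
compatibility of the global map `f` with the branches `F j`:  `f` agrees with `F j`
on `I_j` except possibly at a boundary point shared with an adjacent interval,
where `f` is given by one of the two adjacent branches. -/
structure IsMarkov {n : ℕ} (M : MarkovSystem n) : Prop where
  compat₁ : ∀ j < n, ∀ x ∈ M.Ipart j, (∀ k < n, k ≠ j → x ∉ M.Ipart k) → M.f x = M.F j x
  compat₂ : ∀ x ∈ M.dom, ∃ j, j < n ∧ x ∈ M.Ipart j ∧ M.f x = M.F j x
  maps_into : ∀ j < n, M.F j '' M.Ipart j ⊆ M.itv
  onto : M.itv ⊆ ⋃ j ∈ Finset.range n, M.F j '' M.Ipart j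
  markov : ∀ i < n, ∃ S T : Set ℕ, S ⊆ {j | j < n} ∧ T ⊆ {j | 1 ≤ j ∧ j < n} ∧
    M.F i '' M.Ipart i = (⋃ j ∈ S, M.Ipart j) ∪ (⋃ j ∈ T, M.Epart j)
  deriv : ∀ i < n, ∀ x ∈ M.Ipart i, HasDerivWithinAt (M.F i) (M.F' i x) (M.Ipart i) x
  derivCont : ∀ i < n, ContinuousOn (M.F' i) (M.Ipart i)
  mono : ∀ i < n, StrictMonoOn (M.F i) (M.Ipart i) ∨ StrictAntiOn (M.F i) (M.Ipart i)
  expansive : ∃ b > 1, ∀ i < n, ∀ x ∈ M.Ipart i, b < |M.F' i x|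
  aperiodic : ∀ i < n, ∃ q, M.dom ⊆ M.iterImage q (M.Ipart i)

namespace MarkovSystem

variable {n : ℕ} (M : MarkovSystem n)

/-- The Hilbert space `H_x = ℓ²(R_f(x))`. -/
abbrev Hsp (x : ℝ) : Type _ := lp (fun _ : M.Rclass x => ℂ) 2

/-- The canonical orthonormal basis vector `δ_z` of `H_x`, for `z ∈ R_f(x)`. -/
def dvec {x : ℝ} (z : M.Rclass x) : M.Hsp x := lp.single 2 z 1

/-- `T` is the bounded operator `T_i` on `H_x`, determined on the basis by
`T_i δ_y = δ_{(f|_{I_i})⁻¹(y)}` if `y ∈ f(I_i)` and `T_i δ_y = 0` otherwise. -/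
def IsBranchOp (x : ℝ) (i : ℕ) (T : M.Hsp x →L[ℂ] M.Hsp x) : Prop :=
  (∀ z w : M.Rclass x, (w : ℝ) ∈ M.Ipart i → M.F i w = (z : ℝ) →
      T (M.dvec z) = M.dvec w) ∧
  (∀ z : M.Rclass x, (z : ℝ) ∉ M.F i '' M.Ipart i → T (M.dvec z) = 0)

/-- `Pe` is the rank-one orthogonal projection onto `ℂ δ_{e(x)}`. -/
def IsEscProj (x : ℝ) (Pe : M.Hsp x →L[ℂ] M.Hsp x) : Prop :=
  ∀ z : M.Rclass x, Pe (M.dvec z) = if (z : ℝ) = M.e x then M.dvec z else 0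

end MarkovSystem

namespace MarkovSystem

variable {n : ℕ} (M : MarkovSystem n) {i j k : ℕ}


lemma cp_lt_cm_of_lt : ∀ {i j : ℕ}, i < j → j ≤ n → M.cp i < M.cm j := by
  intro i j h hj
  induction j with
  | zero => omega
  | succ m ih =>
    rcases Nat.lt_succ_iff_lt_or_eq.mp h with h' | h'
    · exact (ih h' (by omega)).trans_le
        ((M.cm_le_cp m (by omega)).trans (M.cp_lt_cm m (by omega)).le)
    · subst h'; exact M.cp_lt_cm i (by omega)

lemma cp_le_cp (hij : i ≤ j) (hj : j ≤ n) : M.cp i ≤ M.cp j := by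
  rcases eq_or_lt_of_le hij with rfl | h
  · exact le_rfl
  · exact ((M.cp_lt_cm_of_lt h hj).trans_le (M.cm_le_cp j hj)).le

lemma cm_le_cm (hij : i ≤ j) (hj : j ≤ n) : M.cm i ≤ M.cm j := by
  rcases eq_or_lt_of_le hij with rfl | h
  · exact le_rfl
  · exact ((M.cm_le_cp i (by omega)).trans_lt (M.cp_lt_cm_of_lt h hj)).le

lemma cm_le_cp_of_le (hij : i ≤ j) (hj : j ≤ n) : M.cm i ≤ M.cp j :=
  (M.cm_le_cm hij hj).trans (M.cm_le_cp j hj)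

lemma cp_le_cm_of_lt (hij : i < j) (hj : j ≤ n) : M.cp i ≤ M.cm j :=
  (M.cp_lt_cm_of_lt hij hj).le

lemma Ipart_subset_itv (hi : i < n) : M.Ipart i ⊆ M.itv := by
  intro y hy
  obtain ⟨h1, h2⟩ := hy
  refine ⟨?_, h2.trans (M.cm_le_cm (by omega) le_rfl)⟩
  calc M.cm 0 = M.cp 0 := M.cm_zero
    _ ≤ M.cp i := M.cp_le_cp (Nat.zero_le i) (by omega)
    _ ≤ y := h1

lemma mem_dom_iff {y : ℝ} : y ∈ M.dom ↔ ∃ i < n, y ∈ M.Ipart i := by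
  simp [dom, Finset.mem_range]

lemma Ipart_subset_dom (hi : i < n) : M.Ipart i ⊆ M.dom := fun y hy =>
  (M.mem_dom_iff).2 ⟨i, hi, hy⟩

lemma cm_mem_gamma (hj : j ≤ n) : M.cm j ∈ M.Gamma := ⟨j, hj, Or.inl rfl⟩
lemma cp_mem_gamma (hj : j ≤ n) : M.cp j ∈ M.Gamma := ⟨j, hj, Or.inr rfl⟩

lemma gamma_endpoint (hi : i < n) {γ : ℝ} (hγ : γ ∈ M.Gamma) (hmem : γ ∈ M.Ipart i) :
    γ = M.cp i ∨ γ = M.cm (i + 1) := by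
  obtain ⟨j, hj, hjγ⟩ := hγ
  obtain ⟨h1, h2⟩ := hmem
  by_cases hji : j ≤ i
  · left
    have hle : γ ≤ M.cp i := by
      rcases hjγ with rfl | rfl
      · exact M.cm_le_cp_of_le hji (by omega)
      · exact M.cp_le_cp hji (by omega)
    exact le_antisymm hle h1
  · right
    have hge : M.cm (i + 1) ≤ γ := by
      rcases hjγ with rfl | rfl
      · exact M.cm_le_cm (by omega) hj
      · exact M.cm_le_cp_of_le (by omega) hj
    exact le_antisymm h2 hge

lemma cm_mem_dom (hj : j ≤ n) : M.cm j ∈ M.dom := by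
  rcases j with _ | m
  · exact M.Ipart_subset_dom (i := 0) (by have := M.two_le; omega)
      ⟨le_of_eq M.cm_zero.symm, M.cm_le_cm (by omega) (by have := M.two_le; omega)⟩
  · exact M.Ipart_subset_dom (i := m) (by omega)
      ⟨M.cp_le_cm_of_lt (by omega) hj, le_rfl⟩

lemma cp_mem_dom (hj : j ≤ n) : M.cp j ∈ M.dom := by
  rcases eq_or_lt_of_le hj with rfl | hjn
  · rw [← M.cm_n]; exact M.cm_mem_dom le_rfl
  · exact M.Ipart_subset_dom (i := j) hjn ⟨le_rfl, M.cp_le_cm_of_lt (by omega) (by omega)⟩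

lemma gamma_subset_dom : M.Gamma ⊆ M.dom := by
  rintro γ ⟨j, hj, rfl | rfl⟩
  · exact M.cm_mem_dom hj
  · exact M.cp_mem_dom hj

lemma lb_mem_gamma {S T : Set ℕ} (hS : S ⊆ {j | j < n}) (hT : T ⊆ {j | 1 ≤ j ∧ j < n})
    {y : ℝ} (hy : y ∈ (⋃ j ∈ S, M.Ipart j) ∪ ⋃ j ∈ T, M.Epart j)
    (hlb : ∀ w ∈ (⋃ j ∈ S, M.Ipart j) ∪ ⋃ j ∈ T, M.Epart j, y ≤ w) : y ∈ M.Gamma := by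
  rcases hy with hy | hy
  · rw [Set.mem_iUnion₂] at hy
    obtain ⟨m, hmS, h1, h2⟩ := hy
    have hmn : m < n := hS hmS
    have hcp : M.cp m ∈ (⋃ j ∈ S, M.Ipart j) ∪ ⋃ j ∈ T, M.Epart j :=
      Or.inl (Set.mem_iUnion₂.2 ⟨m, hmS, le_rfl, M.cp_le_cm_of_lt (by omega) (by omega)⟩)
    have := hlb _ hcp
    exact (le_antisymm this h1) ▸ M.cp_mem_gamma (by omega)
  · rw [Set.mem_iUnion₂] at hy
    obtain ⟨m, hmT, h1, h2⟩ := hy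
    exfalso
    have hmid : (M.cm m + y) / 2 ∈ (⋃ j ∈ S, M.Ipart j) ∪ ⋃ j ∈ T, M.Epart j :=
      Or.inr (Set.mem_iUnion₂.2 ⟨m, hmT, by constructor <;> [linarith; linarith]⟩)
    have := hlb _ hmid
    linarith

lemma ub_mem_gamma {S T : Set ℕ} (hS : S ⊆ {j | j < n}) (hT : T ⊆ {j | 1 ≤ j ∧ j < n})
    {y : ℝ} (hy : y ∈ (⋃ j ∈ S, M.Ipart j) ∪ ⋃ j ∈ T, M.Epart j)
    (hub : ∀ w ∈ (⋃ j ∈ S, M.Ipart j) ∪ ⋃ j ∈ T, M.Epart j, w ≤ y) : y ∈ M.Gamma := by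
  rcases hy with hy | hy
  · rw [Set.mem_iUnion₂] at hy
    obtain ⟨m, hmS, h1, h2⟩ := hy
    have hmn : m < n := hS hmS
    have hcm : M.cm (m + 1) ∈ (⋃ j ∈ S, M.Ipart j) ∪ ⋃ j ∈ T, M.Epart j :=
      Or.inl (Set.mem_iUnion₂.2 ⟨m, hmS, M.cp_le_cm_of_lt (by omega) (by omega), le_rfl⟩)
    have := hub _ hcm
    exact (le_antisymm h2 this) ▸ M.cm_mem_gamma (by omega)
  · rw [Set.mem_iUnion₂] at hy
    obtain ⟨m, hmT, h1, h2⟩ := hy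
    exfalso
    have hmid : (y + M.cp m) / 2 ∈ (⋃ j ∈ S, M.Ipart j) ∪ ⋃ j ∈ T, M.Epart j :=
      Or.inr (Set.mem_iUnion₂.2 ⟨m, hmT, by constructor <;> [linarith; linarith]⟩)
    have := hub _ hmid
    linarith

lemma F_endpoint_mem_gamma (hM : IsMarkov M) (hi : i < n) {u : ℝ}
    (hu : u ∈ M.Ipart i) (hend : u = M.cp i ∨ u = M.cm (i + 1)) : M.F i u ∈ M.Gamma := by
  obtain ⟨S, T, hS, hT, himg⟩ := hM.markov i hi
  have hmem : M.F i u ∈ (⋃ j ∈ S, M.Ipart j) ∪ ⋃ j ∈ T, M.Epart j := by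
    rw [← himg]; exact ⟨u, hu, rfl⟩
  rcases hM.mono i hi with hmono | hanti
  · rcases hend with rfl | rfl
    · refine M.lb_mem_gamma hS hT hmem ?_
      intro w hw
      rw [← himg] at hw
      obtain ⟨v, hv, rfl⟩ := hw
      exact hmono.monotoneOn hu hv hv.1
    · refine M.ub_mem_gamma hS hT hmem ?_
      intro w hw
      rw [← himg] at hw
      obtain ⟨v, hv, rfl⟩ := hw
      exact hmono.monotoneOn hv hu hv.2
  · rcases hend with rfl | rfl
    · refine M.ub_mem_gamma hS hT hmem ?_
      intro w hw
      rw [← himg] at hw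
      obtain ⟨v, hv, rfl⟩ := hw
      exact hanti.antitoneOn hu hv hv.1
    · refine M.lb_mem_gamma hS hT hmem ?_
      intro w hw
      rw [← himg] at hw
      obtain ⟨v, hv, rfl⟩ := hw
      exact hanti.antitoneOn hv hu hv.2

lemma f_maps_gamma (hM : IsMarkov M) {γ : ℝ} (hγ : γ ∈ M.Gamma) : M.f γ ∈ M.Gamma := by
  obtain ⟨j, hjn, hjm, hfe⟩ := hM.compat₂ γ (M.gamma_subset_dom hγ)
  rw [hfe]
  exact M.F_endpoint_mem_gamma hM hjn hjm (M.gamma_endpoint hjn hγ hjm)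

lemma iterate_gamma (hM : IsMarkov M) {γ : ℝ} (hγ : γ ∈ M.Gamma) (m : ℕ) :
    M.f^[m] γ ∈ M.Gamma := by
  induction m with
  | zero => exact hγ
  | succ l ih => rw [Function.iterate_succ_apply']; exact M.f_maps_gamma hM ih

lemma rclass_not_gamma (hM : IsMarkov M) {x z : ℝ} (hx : x ∈ M.Esc) (hz : z ∈ M.Rclass x) :
    z ∉ M.Gamma := by
  intro hγ
  obtain ⟨hzi, p, q, hp, hq, heq⟩ := hz
  apply hx.2
  refine ⟨hx.1, fun l => ?_⟩
  by_cases hl : l < p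
  · exact hp l hl
  · have hrw : M.f^[l] x = M.f^[l - p] (M.f^[p] x) := by
      rw [← Function.iterate_add_apply]
      congr 1
      omega
    rw [hrw, heq, ← Function.iterate_add_apply]
    exact M.gamma_subset_dom (M.iterate_gamma hM hγ _)

lemma esc_nonempty {x : ℝ} (hx : x ∈ M.Esc) : {k | M.f^[k] x ∉ M.dom}.Nonempty := by
  by_contra h
  rw [Set.not_nonempty_iff_eq_empty, Set.eq_empty_iff_forall_notMem] at h
  exact hx.2 ⟨hx.1, fun m => not_not.mp (h m)⟩

lemma e_notMem_dom {x : ℝ} (hx : x ∈ M.Esc) : M.e x ∉ M.dom :=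
  Nat.sInf_mem (M.esc_nonempty hx)

lemma eq_e_of_not_dom {x z : ℝ} (hx : x ∈ M.Esc) (hz : z ∈ M.Rclass x) (hzd : z ∉ M.dom) :
    z = M.e x := by
  obtain ⟨hzi, p, q, hp, hq, heq⟩ := hz
  rcases Nat.eq_zero_or_pos q with rfl | hq0
  · simp only [Function.iterate_zero_apply] at heq
    have hple : M.tau x ≤ p := Nat.sInf_le (by rw [Set.mem_setOf_eq, heq]; exact hzd)
    have hpge : ¬ M.tau x < p := fun h => (M.e_notMem_dom hx) (hp _ h)
    have : M.tau x = p := by omega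
    rw [← heq, e, this]
  · exact absurd (hq 0 hq0) hzd

lemma fz_mem_rclass (hM : IsMarkov M) {x z : ℝ} (hz : z ∈ M.Rclass x) (hzd : z ∈ M.dom) :
    M.f z ∈ M.Rclass x := by
  obtain ⟨hzi, p, q, hp, hq, heq⟩ := hz
  obtain ⟨j, hjn, hjm, hfe⟩ := hM.compat₂ z hzd
  have hitv : M.f z ∈ M.itv := hfe ▸ hM.maps_into j hjn ⟨z, hjm, rfl⟩
  refine ⟨hitv, ?_⟩
  rcases q with _ | m
  · refine ⟨p + 1, 0, ?_, fun l hl => absurd hl (by omega), ?_⟩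
    · intro l hl
      rcases Nat.lt_succ_iff_lt_or_eq.mp hl with hl' | rfl
      · exact hp l hl'
      · rw [heq]; exact hzd
    · rw [Function.iterate_succ_apply', heq]
      rfl
  · refine ⟨p, m, hp, ?_, ?_⟩
    · intro l hl
      rw [← Function.iterate_succ_apply]
      exact hq (l + 1) (by omega)
    · rw [← Function.iterate_succ_apply]
      exact heq

lemma pre_mem_rclass {x z u : ℝ} (hz : z ∈ M.Rclass x) (hui : u ∈ M.itv) (hud : u ∈ M.dom)
    (hfu : M.f u = z) : u ∈ M.Rclass x := by
  obtain ⟨hzi, p, q, hp, hq, heq⟩ := hz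
  refine ⟨hui, p, q + 1, hp, ?_, ?_⟩
  · intro l hl
    rcases Nat.eq_zero_or_pos l with rfl | hl0
    · exact hud
    · obtain ⟨m, rfl⟩ := Nat.exists_eq_succ_of_ne_zero hl0.ne'
      rw [Function.iterate_succ_apply, hfu]
      exact hq m (by omega)
  · rw [Function.iterate_succ_apply, hfu]
    exact heq

lemma mem_Ioo_of_not_gamma (hi : i < n) {z : ℝ} (hz : z ∈ M.Ipart i) (hγ : z ∉ M.Gamma) :
    z ∈ Set.Ioo (M.cp i) (M.cm (i + 1)) := by
  refine ⟨lt_of_le_of_ne hz.1 ?_, lt_of_le_of_ne hz.2 ?_⟩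
  · intro h; exact hγ (h ▸ M.cp_mem_gamma (by omega))
  · intro h; exact hγ (h ▸ M.cm_mem_gamma (by omega))

lemma Ipart_inter_gamma (hi : i < n) (hk : k < n) (hik : i ≠ k) {z : ℝ}
    (h1 : z ∈ M.Ipart i) (h2 : z ∈ M.Ipart k) : z ∈ M.Gamma := by
  rcases Nat.lt_or_ge i k with h | h
  · have hle : z ≤ M.cp k := h1.2.trans (M.cm_le_cp_of_le (by omega) (by omega))
    exact (le_antisymm hle h2.1) ▸ M.cp_mem_gamma (by omega)
  · have hki : k < i := by omega
    have hle : z ≤ M.cp i := h2.2.trans (M.cm_le_cp_of_le (by omega) (by omega))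
    exact (le_antisymm hle h1.1) ▸ M.cp_mem_gamma (by omega)

lemma f_eq_F (hM : IsMarkov M) (hi : i < n) {z : ℝ}
    (hz : z ∈ Set.Ioo (M.cp i) (M.cm (i + 1))) : M.f z = M.F i z := by
  have hzI : z ∈ M.Ipart i := ⟨hz.1.le, hz.2.le⟩
  refine hM.compat₁ i hi z hzI fun m hm hmi hzm => ?_
  rcases M.gamma_endpoint hi (M.Ipart_inter_gamma hm hi hmi hzm hzI) hzI with h | h
  · exact hz.1.ne h.symm
  · exact hz.2.ne h

lemma preimage_spec (hM : IsMarkov M) {x : ℝ} (hx : x ∈ M.Esc) (hi : i < n) {w : ℝ}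
    (hw : w ∈ M.Rclass x) {u : ℝ} (hu : u ∈ M.Ipart i) (hfu : M.F i u = w) :
    u ∈ M.Rclass x := by
  have hwγ := M.rclass_not_gamma hM hx hw
  have huγ : u ∉ M.Gamma := fun hγ =>
    hwγ (hfu ▸ M.F_endpoint_mem_gamma hM hi hu (M.gamma_endpoint hi hγ hu))
  have hio := M.mem_Ioo_of_not_gamma hi hu huγ
  exact M.pre_mem_rclass hw (M.Ipart_subset_itv hi hu) (M.Ipart_subset_dom hi hu)
    ((M.f_eq_F hM hi hio).trans hfu)

lemma image_spec (hM : IsMarkov M) {x : ℝ} (hx : x ∈ M.Esc) (hi : i < n) {z : ℝ}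
    (hz : z ∈ M.Rclass x) (hzi : z ∈ M.Ipart i) : M.F i z ∈ M.Rclass x := by
  have hio := M.mem_Ioo_of_not_gamma hi hzi (M.rclass_not_gamma hM hx hz)
  have hmem := M.fz_mem_rclass hM hz (M.Ipart_subset_dom hi hzi)
  rwa [M.f_eq_F hM hi hio] at hmem

lemma F_injOn (hM : IsMarkov M) (hi : i < n) : Set.InjOn (M.F i) (M.Ipart i) := by
  rcases hM.mono i hi with h | h
  · exact h.injOn
  · exact h.injOn


local notation "⟪" a ", " b "⟫" => @inner ℂ _ _ a b

lemma inner_dvec_left {x : ℝ} (w : M.Rclass x) (u : M.Hsp x) :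
    ⟪M.dvec w, u⟫ = u w := by
  rw [dvec, lp.inner_single_left]
  simp [RCLike.inner_apply]

lemma coord_ext {x : ℝ} {u v : M.Hsp x}
    (h : ∀ w : M.Rclass x, ⟪M.dvec w, u⟫ = ⟪M.dvec w, v⟫) : u = v := by
  apply lp.ext
  funext w
  have hw := h w
  rwa [M.inner_dvec_left, M.inner_dvec_left] at hw

lemma dvec_apply_self {x : ℝ} (z : M.Rclass x) : (M.dvec z) z = 1 :=
  lp.single_apply_self _ _ _

lemma dvec_apply_ne {x : ℝ} (z w : M.Rclass x) (h : w ≠ z) : (M.dvec z) w = 0 :=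
  lp.single_apply_ne _ _ _ h

lemma ext_of_dvec {x : ℝ} (A B : M.Hsp x →L[ℂ] M.Hsp x)
    (h : ∀ z : M.Rclass x, A (M.dvec z) = B (M.dvec z)) : A = B := by
  refine ContinuousLinearMap.ext fun u => ?_
  have hs := lp.hasSum_single (E := fun _ : M.Rclass x => ℂ) ENNReal.ofNat_ne_top u
  have key : ∀ z : M.Rclass x,
      lp.single 2 z (u z) = u z • (lp.single 2 z (1 : ℂ) : M.Hsp x) := by
    intro z
    rw [← lp.single_smul]
    norm_num
  have hA : HasSum (fun z => A (lp.single 2 z (u z))) (A u) := A.hasSum hs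
  have hB : HasSum (fun z => B (lp.single 2 z (u z))) (B u) := B.hasSum hs
  refine hA.unique ?_
  convert hB using 2 with z
  rw [key, map_smul, map_smul]
  exact congrArg _ (h z)

end MarkovSystem

/-- For `x ∈ E_f`, `∑_i T_i T_i* = 1 − P_{e(x)}`: the ranges of the `T_i`
together with `ℂ δ_{e(x)}` form an orthogonal decomposition of `H_x`. -/
theorem sum_range_projections {n : ℕ} (M : MarkovSystem n) (hM : IsMarkov M)
    {x : ℝ} (hx : x ∈ M.Esc)
    (T : ℕ → (M.Hsp x →L[ℂ] M.Hsp x)) (hT : ∀ i < n, M.IsBranchOp x i (T i))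
    (Pe : M.Hsp x →L[ℂ] M.Hsp x) (hPe : M.IsEscProj x Pe) :
    (∑ i ∈ Finset.range n, T i * star (T i)) = 1 - Pe := by
  classical
  apply M.ext_of_dvec
  intro z
  rw [ContinuousLinearMap.sum_apply]
  have main : ∀ i, ∀ hi : i < n,
      (T i * star (T i)) (M.dvec z) = if (z : ℝ) ∈ M.Ipart i then M.dvec z else 0 := by
    intro i hi
    rw [ContinuousLinearMap.mul_apply]
    by_cases hzi : (z : ℝ) ∈ M.Ipart i
    · rw [if_pos hzi]
      have hw : M.F i (z : ℝ) ∈ M.Rclass x := M.image_spec hM hx hi z.2 hzi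
      have hadj : star (T i) (M.dvec z) = M.dvec ⟨M.F i (z : ℝ), hw⟩ := by
        apply M.coord_ext
        intro v
        rw [ContinuousLinearMap.star_eq_adjoint, ContinuousLinearMap.adjoint_inner_right,
          M.inner_dvec_left]
        by_cases hv : (v : ℝ) ∈ M.F i '' M.Ipart i
        · obtain ⟨u, hu, hfu⟩ := hv
          have hur : u ∈ M.Rclass x := M.preimage_spec hM hx hi v.2 hu hfu
          rw [(hT i hi).1 v ⟨u, hur⟩ hu hfu, M.inner_dvec_left]
          by_cases huz : u = (z : ℝ)
          · have h1 : (⟨u, hur⟩ : M.Rclass x) = z := Subtype.ext huz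
            have h2 : v = ⟨M.F i (z : ℝ), hw⟩ := Subtype.ext (by rw [← hfu, huz])
            rw [h1, h2, M.dvec_apply_self, M.dvec_apply_self]
          · rw [M.dvec_apply_ne z ⟨u, hur⟩ (fun h => huz (congrArg Subtype.val h)),
              M.dvec_apply_ne _ v (fun h => huz (M.F_injOn hM hi hu hzi
                (by rw [hfu]; exact congrArg Subtype.val h)))]
        · rw [(hT i hi).2 v hv, inner_zero_left]
          exact (M.dvec_apply_ne _ v fun h =>
            hv (by rw [congrArg Subtype.val h]; exact ⟨(z : ℝ), hzi, rfl⟩)).symm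
      rw [hadj]
      exact (hT i hi).1 ⟨M.F i (z : ℝ), hw⟩ z hzi rfl
    · rw [if_neg hzi]
      have hadj : star (T i) (M.dvec z) = 0 := by
        apply M.coord_ext
        intro v
        rw [inner_zero_right, ContinuousLinearMap.star_eq_adjoint,
          ContinuousLinearMap.adjoint_inner_right]
        by_cases hv : (v : ℝ) ∈ M.F i '' M.Ipart i
        · obtain ⟨u, hu, hfu⟩ := hv
          have hur : u ∈ M.Rclass x := M.preimage_spec hM hx hi v.2 hu hfu
          rw [(hT i hi).1 v ⟨u, hur⟩ hu hfu, M.inner_dvec_left]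
          exact M.dvec_apply_ne z ⟨u, hur⟩ fun h =>
            hzi (by rw [← congrArg Subtype.val h]; exact hu)
        · rw [(hT i hi).2 v hv, inner_zero_left]
      rw [hadj, map_zero]
  by_cases hz : (z : ℝ) = M.e x
  · have hzd : (z : ℝ) ∉ M.dom := hz ▸ M.e_notMem_dom hx
    have hzero : ∀ i ∈ Finset.range n, (T i * star (T i)) (M.dvec z) = 0 := by
      intro i hi
      rw [main i (Finset.mem_range.mp hi),
        if_neg fun h => hzd (M.Ipart_subset_dom (Finset.mem_range.mp hi) h)]
    rw [Finset.sum_eq_zero hzero, ContinuousLinearMap.sub_apply,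
      ContinuousLinearMap.one_apply, hPe z, if_pos hz, sub_self]
  · have hzd : (z : ℝ) ∈ M.dom := by
      by_contra h
      exact hz (M.eq_e_of_not_dom hx z.2 h)
    obtain ⟨i0, hi0, hmem⟩ := M.mem_dom_iff.mp hzd
    have hzero : ∀ i ∈ Finset.range n, i ≠ i0 → (T i * star (T i)) (M.dvec z) = 0 := by
      intro i hi hne
      rw [main i (Finset.mem_range.mp hi), if_neg]
      intro h
      exact M.rclass_not_gamma hM hx z.2
        (M.Ipart_inter_gamma (Finset.mem_range.mp hi) hi0 hne h hmem)
    rw [Finset.sum_eq_single_of_mem i0 (Finset.mem_range.mpr hi0) hzero, main i0 hi0,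
      if_pos hmem, ContinuousLinearMap.sub_apply, ContinuousLinearMap.one_apply, hPe z,
      if_neg hz, sub_zero]
end
end

section
/- Let f be a Markov interval map. Then its transition matrix A_f is primitive: there exists m ≥ 1 such that every entry of the matrix power A_f^m is strictly positive. -/
/-!
Let `A` be the transition matrix. Up to a finite set (images of partition points), the part of
`f^q(I_i)` lying in the domain is covered by the intervals `I_j` with `(A ^ q) i j > 0`. By (P4)
some `f^q(I_i)` contains the whole domain, hence infinitely many interior points of every `I_j`,
so row `i` of `A ^ q` is positive, and `q ≥ 1` because `n ≥ 2`. Positive rows of positive powers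
force every column of `A` to have a nonzero entry, so a positive row of `A ^ q` stays positive in
all higher powers, and any exponent exceeding all the row exponents works.
-/

open scoped Classical ENNReal

noncomputable section

open Set

namespace Matrix

variable {ι R : Type*} [Fintype ι] [DecidableEq ι] [Semiring R] {A : Matrix ι ι R}

theorem exists_apply_ne_zero_of_pow_succ_apply_ne_zero {q : ℕ} {i j : ι}
    (h : (A ^ (q + 1)) i j ≠ 0) : ∃ k, A k j ≠ 0 := by
  by_contra! hcol
  exact h (by simp [pow_succ, mul_apply, hcol])

variable [PartialOrder R] [IsOrderedRing R] [PosMulStrictMono R]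

theorem pow_succ_apply_pos (hA : ∀ i j, 0 ≤ A i j) {q : ℕ} {i k j : ι}
    (hik : 0 < (A ^ q) i k) (hkj : 0 < A k j) : 0 < (A ^ (q + 1)) i j := by
  rw [pow_succ, mul_apply]
  exact (mul_pos hik hkj).trans_le <| Finset.single_le_sum (f := fun l => (A ^ q) i l * A l j)
    (fun l _ => mul_nonneg (pow_apply_nonneg hA q i l) (hA l j)) (Finset.mem_univ k)

theorem pow_add_apply_pos (hA : ∀ i j, 0 ≤ A i j) (hcol : ∀ j, ∃ k, 0 < A k j) {q : ℕ} {i : ι}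
    (hrow : ∀ j, 0 < (A ^ q) i j) (t : ℕ) (j : ι) : 0 < (A ^ (q + t)) i j := by
  induction t generalizing j with
  | zero => exact hrow j
  | succ t ih =>
    obtain ⟨k, hk⟩ := hcol j
    exact pow_succ_apply_pos hA (ih k) hk

theorem exists_pow_pos_of_forall_row_pos (hA : ∀ i j, 0 ≤ A i j)
    (h : ∀ i, ∃ q > 0, ∀ j, 0 < (A ^ q) i j) : ∃ m > 0, ∀ i j, 0 < (A ^ m) i j := by
  choose q hq hrow using h
  have hcol : ∀ j, ∃ k, 0 < A k j := by
    intro j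
    obtain ⟨q', hq'⟩ := Nat.exists_eq_succ_of_ne_zero (hq j).ne'
    obtain ⟨k, hk⟩ := exists_apply_ne_zero_of_pow_succ_apply_ne_zero (hq' ▸ hrow j j).ne'
    exact ⟨k, (hA k j).lt_of_ne' hk⟩
  refine ⟨∑ i, q i + 1, Nat.succ_pos _, fun i j => ?_⟩
  obtain ⟨t, ht⟩ := Nat.exists_eq_add_of_le <| (Finset.single_le_sum (fun i _ => Nat.zero_le (q i))
    (Finset.mem_univ i)).trans (Nat.le_add_right _ 1)
  rw [ht]
  exact pow_add_apply_pos hA hcol (hrow i) t j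

end Matrix

theorem StrictMonoOn.Ioo_subset_image_Ioo {α β : Type*} [LinearOrder α] [LinearOrder β]
    {g : α → β} {a b : α} {c d : β} (hg : StrictMonoOn g (Icc a b))
    (h : Icc c d ⊆ g '' Icc a b) : Ioo c d ⊆ g '' Ioo a b := by
  rintro y ⟨hcy, hyd⟩
  obtain ⟨x, hx, rfl⟩ := h ⟨hcy.le, hyd.le⟩
  obtain ⟨xc, hxc, rfl⟩ := h ⟨le_rfl, (hcy.trans hyd).le⟩
  obtain ⟨xd, hxd, rfl⟩ := h ⟨(hcy.trans hyd).le, le_rfl⟩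
  refine ⟨x, ⟨lt_of_not_ge fun hxa => ?_, lt_of_not_ge fun hbx => ?_⟩, rfl⟩
  · exact (hg.monotoneOn hx hxc (hxa.trans hxc.1)).not_gt hcy
  · exact (hg.monotoneOn hxd hx (hxd.2.trans hbx)).not_gt hyd

theorem StrictAntiOn.Ioo_subset_image_Ioo {α β : Type*} [LinearOrder α] [LinearOrder β]
    {g : α → β} {a b : α} {c d : β} (hg : StrictAntiOn g (Icc a b))
    (h : Icc c d ⊆ g '' Icc a b) : Ioo c d ⊆ g '' Ioo a b :=
  fun _ hy => hg.dual_right.Ioo_subset_image_Ioo (c := OrderDual.toDual d)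
    (d := OrderDual.toDual c) (fun _ hz => h ⟨hz.2, hz.1⟩) ⟨hy.2, hy.1⟩

namespace MarkovSystem

variable {n : ℕ} (M : MarkovSystem n)

def transMatrix : Matrix (Fin n) (Fin n) ℕ := Matrix.of fun i j => if M.trans i j then 1 else 0

theorem transMatrix_pos {i j : Fin n} (h : M.trans i j) : 0 < M.transMatrix i j := by
  simp [transMatrix, h]

theorem cm_monotoneOn : MonotoneOn M.cm (Iic n) :=
  monotoneOn_of_le_succ ordConnected_Iic fun j _ _ hj =>
    (M.cm_le_cp j (by simp_all)).trans (M.cp_lt_cm j (by simp_all [Order.succ_eq_add_one])).le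

theorem cp_monotoneOn : MonotoneOn M.cp (Iic n) :=
  monotoneOn_of_le_succ ordConnected_Iic fun j _ _ hj =>
    (M.cp_lt_cm j (by simp_all [Order.succ_eq_add_one])).le.trans (M.cm_le_cp _ hj)

theorem cm_le_cp_of_le_s18 {a b : ℕ} (hab : a ≤ b) (hb : b ≤ n) : M.cm a ≤ M.cp b :=
  (M.cm_monotoneOn (hab.trans hb) hb hab).trans (M.cm_le_cp b hb)

theorem interior_Ipart (j : ℕ) : interior (M.Ipart j) = Ioo (M.cp j) (M.cm (j + 1)) :=
  interior_Icc

theorem eq_of_mem_interior_Ipart {j j' : ℕ} (hj : j < n) (hj' : j' < n) {x : ℝ}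
    (hx : x ∈ interior (M.Ipart j)) (hx' : x ∈ M.Ipart j') : j' = j := by
  rw [M.interior_Ipart] at hx
  obtain ⟨h₁, h₂⟩ := hx
  obtain ⟨h₃, h₄⟩ := hx'
  by_contra hne
  rcases Nat.lt_or_gt_of_ne hne with h | h
  · linarith [M.cm_le_cp_of_le_s18 h hj.le]
  · linarith [M.cm_le_cp_of_le_s18 h hj'.le]

theorem disjoint_Epart_dom {k : ℕ} (hk : k ≤ n) : Disjoint (M.Epart k) M.dom := by
  refine disjoint_left.2 fun x ⟨h₁, h₂⟩ hx => ?_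
  obtain ⟨j, hj, h₃, h₄⟩ := mem_iUnion₂.1 hx
  rw [Finset.mem_range] at hj
  rcases le_or_gt k j with h | h
  · linarith [M.cp_monotoneOn (h.trans hj.le) hj.le h]
  · linarith [M.cm_monotoneOn (Nat.succ_le_of_lt (h.trans_le hk)) hk h]

theorem Gamma_finite : M.Gamma.Finite := by
  refine (((finite_Iic n).image M.cm).union ((finite_Iic n).image M.cp)).subset ?_
  rintro y ⟨j, hj, rfl | rfl⟩
  exacts [Or.inl ⟨j, hj, rfl⟩, Or.inr ⟨j, hj, rfl⟩]

theorem mem_interior_Ipart_of_notMem_Gamma {j : ℕ} (hj : j < n) {x : ℝ} (hx : x ∈ M.Ipart j)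
    (hxΓ : x ∉ M.Gamma) : x ∈ interior (M.Ipart j) := by
  rw [M.interior_Ipart]
  refine ⟨hx.1.lt_of_ne fun h => hxΓ ⟨j, hj.le, Or.inr h.symm⟩,
    hx.2.lt_of_ne fun h => hxΓ ⟨j + 1, hj, Or.inl h⟩⟩

end MarkovSystem

namespace IsMarkov

open MarkovSystem

variable {n : ℕ} {M : MarkovSystem n}

theorem trans_of_Ipart_subset (hM : IsMarkov M) {j k : ℕ} (hj : j < n)
    (h : M.Ipart k ⊆ M.F j '' M.Ipart j) : M.trans j k := by
  rw [MarkovSystem.trans, M.interior_Ipart, M.interior_Ipart]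
  rcases hM.mono j hj with hmono | hanti
  exacts [hmono.Ioo_subset_image_Ioo h, hanti.Ioo_subset_image_Ioo h]

theorem exists_trans_of_mem_interior (hM : IsMarkov M) {j : ℕ} (hj : j < n) {x : ℝ}
    (hx : x ∈ interior (M.Ipart j)) (hfx : M.f x ∈ M.dom) :
    ∃ k < n, M.trans j k ∧ M.f x ∈ M.Ipart k := by
  have hxj : x ∈ M.Ipart j := interior_subset hx
  obtain ⟨j', hj', hxj', hf⟩ :=
    hM.compat₂ x (mem_iUnion₂.2 ⟨j, Finset.mem_range.2 hj, hxj⟩)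
  obtain rfl := M.eq_of_mem_interior_Ipart hj hj' hx hxj'
  obtain ⟨S, T, hS, hT, himage⟩ := hM.markov j' hj'
  have hfx' : M.f x ∈ (⋃ k ∈ S, M.Ipart k) ∪ ⋃ k ∈ T, M.Epart k :=
    himage ▸ hf ▸ mem_image_of_mem _ hxj
  rcases hfx' with hI | hE
  · obtain ⟨k, hkS, hk⟩ := mem_iUnion₂.1 hI
    refine ⟨k, hS hkS, hM.trans_of_Ipart_subset hj fun y hy => ?_, hk⟩
    exact himage ▸ Or.inl (mem_iUnion₂.2 ⟨k, hkS, hy⟩)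
  · obtain ⟨k, hkT, hk⟩ := mem_iUnion₂.1 hE
    exact ((M.disjoint_Epart_dom (hT hkT).2.le).notMem_of_mem_left hk hfx).elim

theorem exists_finite_iterImage_inter_dom_subset (hM : IsMarkov M) (i : Fin n) (q : ℕ) :
    ∃ Fq : Set ℝ, Fq.Finite ∧ M.iterImage q (M.Ipart i) ∩ M.dom ⊆
      Fq ∪ {x | ∃ j : Fin n, 0 < (M.transMatrix ^ q) i j ∧ x ∈ M.Ipart j} := by
  induction q with
  | zero => exact ⟨∅, finite_empty, fun x hx => Or.inr ⟨i, by simp, hx.1⟩⟩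
  | succ q ih =>
    obtain ⟨Fq, hFq, hsub⟩ := ih
    refine ⟨M.f '' (Fq ∪ M.Gamma), (hFq.union M.Gamma_finite).image _, ?_⟩
    rintro _ ⟨⟨x, hx, rfl⟩, hfx⟩
    by_cases hxΓ : x ∈ Fq ∪ M.Gamma
    · exact Or.inl (mem_image_of_mem _ hxΓ)
    obtain ⟨hxF, hxΓ⟩ := not_or.1 hxΓ
    obtain hxF' | ⟨j, hpos, hxj⟩ := hsub hx
    · exact (hxF hxF').elim
    obtain ⟨k, hk, htrans, hfxk⟩ := hM.exists_trans_of_mem_interior j.isLt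
      (M.mem_interior_Ipart_of_notMem_Gamma j.isLt hxj hxΓ) hfx
    exact Or.inr ⟨⟨k, hk⟩, Matrix.pow_succ_apply_pos (fun _ _ => Nat.zero_le _) hpos
      (M.transMatrix_pos htrans), hfxk⟩

theorem exists_pow_row_pos (hM : IsMarkov M) (i : Fin n) :
    ∃ q > 0, ∀ j, 0 < (M.transMatrix ^ q) i j := by
  obtain ⟨q, hq⟩ := hM.aperiodic i i.isLt
  obtain ⟨Fq, hFq, hsub⟩ := hM.exists_finite_iterImage_inter_dom_subset i q
  have hrow : ∀ j : Fin n, 0 < (M.transMatrix ^ q) i j := by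
    intro j
    obtain ⟨x, hx, hxF⟩ := ((Ioo_infinite (M.cp_lt_cm j j.isLt)).sdiff hFq).nonempty
    have hxdom : x ∈ M.dom :=
      mem_iUnion₂.2 ⟨j, Finset.mem_range.2 j.isLt, Ioo_subset_Icc_self hx⟩
    obtain hxF' | ⟨j', hpos, hxj'⟩ := hsub ⟨hq hxdom, hxdom⟩
    · exact (hxF hxF').elim
    rwa [← Fin.ext (M.eq_of_mem_interior_Ipart j.isLt j'.isLt (M.interior_Ipart j ▸ hx) hxj')]
  refine ⟨q, Nat.pos_of_ne_zero ?_, hrow⟩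
  rintro rfl
  have : Nontrivial (Fin n) := Fin.nontrivial_iff_two_le.2 M.two_le
  obtain ⟨j, hji⟩ := exists_ne i
  simpa [Matrix.one_apply_ne hji.symm] using hrow j

end IsMarkov

/-- The transition matrix of a Markov interval map is primitive: some power of
it has all entries strictly positive. -/
theorem transition_matrix_primitive {n : ℕ} (M : MarkovSystem n) (hM : IsMarkov M)
    (A : Matrix (Fin n) (Fin n) ℕ)
    (hA : ∀ i j : Fin n, A i j = if M.trans i j then 1 else 0) :
    ∃ m, 1 ≤ m ∧ ∀ i j : Fin n, 0 < (A ^ m) i j := by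
  obtain rfl : A = M.transMatrix := Matrix.ext hA
  exact Matrix.exists_pow_pos_of_forall_row_pos (fun _ _ => Nat.zero_le _) hM.exists_pow_row_pos
end
end
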